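/- If the expansion scalar θ of a null geodesic congruence satisfies the differential inequality dθ/dλ ≤ −θ²/(D−2) with D > 2, and θ(λ₀) = θ₀ < 0 at some parameter value λ₀, then θ → −∞ within affine parameter length at most (D−2)/|θ₀| after λ₀ (the focusing theorem: a caustic forms in finite affine parameter). -/
import Mathlib


/-- focusing theorem: if the expansion `θ` of a null congruence satisfies
`θ' ≤ −θ²/(D−2)` on its maximal interval of existence `[λ₀, λmax)`, with `D ≥ 3` and
`θ(λ₀) = θ₀ < 0`, then a caustic (`θ → −∞`) forms within affine parameter `(D−2)/|θ₀|`,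
i.e. `λmax ≤ λ₀ + (D−2)/|θ₀|`. -/
theorem focusing_theorem (D : ℕ) (hD : 3 ≤ D) (lam0 lamMax : ℝ) (θ d : ℝ → ℝ)
    (hθ0 : θ lam0 < 0)
    (hderiv : ∀ x ∈ Set.Ico lam0 lamMax, HasDerivAt θ (d x) x)
    (hineq : ∀ x ∈ Set.Ico lam0 lamMax, d x ≤ -(θ x) ^ 2 / ((D : ℝ) - 2)) :
    lamMax ≤ lam0 + ((D : ℝ) - 2) / |θ lam0| := by
  by_contra hcon
  push_neg at hcon
  have hD2 : (0:ℝ) < (D:ℝ) - 2 := by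
    have : (3:ℝ) ≤ (D:ℝ) := by exact_mod_cast hD
    linarith
  have habs : |θ lam0| = -θ lam0 := abs_of_neg hθ0
  set c : ℝ := ((D:ℝ) - 2) / |θ lam0| with hc
  have hcpos : 0 < c := div_pos hD2 (abs_pos.mpr (ne_of_lt hθ0))
  set t1 : ℝ := lam0 + c with ht1
  have hsub : Set.Icc lam0 t1 ⊆ Set.Ico lam0 lamMax := fun x hx =>
    ⟨hx.1, lt_of_le_of_lt hx.2 hcon⟩
  have hmem0 : lam0 ∈ Set.Icc lam0 t1 := ⟨le_refl _, by linarith⟩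
  have hmem1 : t1 ∈ Set.Icc lam0 t1 := ⟨by linarith, le_refl _⟩
  -- θ is antitone on [lam0, t1]
  have hanti : AntitoneOn θ (Set.Icc lam0 t1) := by
    apply antitoneOn_of_deriv_nonpos (convex_Icc _ _)
    · exact fun x hx => ((hderiv x (hsub hx)).continuousAt).continuousWithinAt
    · intro x hx
      rw [interior_Icc] at hx
      exact ((hderiv x (hsub ⟨le_of_lt hx.1, le_of_lt hx.2⟩)).differentiableAt).differentiableWithinAt
    · intro x hx
      rw [interior_Icc] at hx
      have hx' : x ∈ Set.Ico lam0 lamMax := hsub ⟨le_of_lt hx.1, le_of_lt hx.2⟩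
      rw [(hderiv x hx').deriv]
      have h1 := hineq x hx'
      have h2 : -(θ x) ^ 2 / ((D:ℝ) - 2) ≤ 0 :=
        div_nonpos_of_nonpos_of_nonneg (neg_nonpos.mpr (sq_nonneg _)) (le_of_lt hD2)
      linarith
  have hneg : ∀ x ∈ Set.Icc lam0 t1, θ x < 0 := fun x hx =>
    lt_of_le_of_lt (hanti hmem0 hx hx.1) hθ0
  -- the comparison function h x = -(θ x)⁻¹ + x / (D-2) is antitone
  have hhd : ∀ x ∈ Set.Icc lam0 t1,
      HasDerivAt (fun y => -(θ y)⁻¹ + y / ((D:ℝ) - 2))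
        (-(-(d x) / θ x ^ 2) + 1 / ((D:ℝ) - 2)) x := by
    intro x hx
    exact (((hderiv x (hsub hx)).inv (ne_of_lt (hneg x hx))).neg).add
      ((hasDerivAt_id x).div_const _)
  have hanti2 : AntitoneOn (fun y => -(θ y)⁻¹ + y / ((D:ℝ) - 2)) (Set.Icc lam0 t1) := by
    apply antitoneOn_of_deriv_nonpos (convex_Icc _ _)
    · exact fun x hx => ((hhd x hx).continuousAt).continuousWithinAt
    · intro x hx
      rw [interior_Icc] at hx
      exact ((hhd x ⟨le_of_lt hx.1, le_of_lt hx.2⟩).differentiableAt).differentiableWithinAt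
    · intro x hx
      rw [interior_Icc] at hx
      have hxI : x ∈ Set.Icc lam0 t1 := ⟨le_of_lt hx.1, le_of_lt hx.2⟩
      rw [(hhd x hxI).deriv]
      have hθx : θ x < 0 := hneg x hxI
      have hθ2 : 0 < θ x ^ 2 := pow_two_pos_of_ne_zero (ne_of_lt hθx)
      have h1 : d x / θ x ^ 2 ≤ -(1 / ((D:ℝ) - 2)) := by
        rw [div_le_iff₀ hθ2]
        calc d x ≤ -(θ x) ^ 2 / ((D:ℝ) - 2) := hineq x (hsub hxI)
          _ = -(1 / ((D:ℝ) - 2)) * θ x ^ 2 := by ring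
      have : -(-(d x) / θ x ^ 2) = d x / θ x ^ 2 := by ring
      rw [this]
      linarith
  have hkey := hanti2 hmem0 hmem1 hmem0.2
  simp only at hkey
  have hθ1 : θ t1 < 0 := hneg t1 hmem1
  have hinv1 : (θ t1)⁻¹ < 0 := inv_lt_zero.mpr hθ1
  have hinv0 : (θ lam0)⁻¹ < 0 := inv_lt_zero.mpr hθ0
  -- compute: h t1 ≤ h lam0 gives -(θ t1)⁻¹ ≤ 0, contradiction
  have ht1eq : t1 = lam0 + ((D:ℝ) - 2) / (-θ lam0) := by rw [ht1, hc, habs]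
  have hne0 : θ lam0 ≠ 0 := ne_of_lt hθ0
  have : -(θ t1)⁻¹ ≤ 0 := by
    have hc2 : c / ((D:ℝ) - 2) = (-θ lam0)⁻¹ := by
      rw [hc, habs]
      field_simp
    have hexp : t1 / ((D:ℝ) - 2) = lam0 / ((D:ℝ) - 2) + (-θ lam0)⁻¹ := by
      rw [ht1, add_div, hc2]
    rw [hexp] at hkey
    have : (-θ lam0)⁻¹ = -(θ lam0)⁻¹ := by field_simp
    rw [this] at hkey
    linarith
  linarith
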